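/- arXiv:1207.2047 — 3 statements merged into one kernel-verified Lean document; each statement's English description precedes it below -/
import Mathlib

section
/- Let f, g, h be continuous with f(t) ≥ 0, g(t) > 0, g decreasing, h(s,t) ≥ 0 on [0,T], and let y be a non-negative continuous function satisfying y(t) ≤ ∫₀ᵗ (f(s)g(t)y(s)² + h(s,t)) ds for all t ∈ [0,T]. If (sup_{t∈[0,T]} ∫₀ᵗ g(s)²f(s) ds) · (sup_{t∈[0,T]} (1/g(t)) ∫₀ᵗ h(s,t) ds) < 1/4, then y(t) ≤ 2 sup_{τ∈[0,t]} ∫₀^τ h(s,τ) ds for all t ∈ [0,T]. -/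
open intervalIntegral Set Filter Topology

/-!
Let `A` be the supremum of `∫₀^τ g² f` and `B` that of `(1 / g τ) ∫₀^τ h(s, τ) ds` over `τ ≤ t`,
and put `c = 2B + ε` with `ε > 0` small, so that `A c² + B < c` because `4AB < 1`. Plugging the
bound `y ≤ c g` on `[0, τ]` into the integral inequality gives `y τ ≤ (A c² + B) g τ < c g τ`,
so by continuity the bound `y < c g`, true at `τ = 0`, can never fail first. Letting `ε → 0`
gives `y t ≤ 2 B g t`, and since `g` decreases, `B g t ≤ sup_{τ ≤ t} ∫₀^τ h(s, τ) ds`.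
-/

theorem lt_of_forall_le_Icc_imp_lt {u v : ℝ → ℝ} {a b : ℝ}
    (hu : ContinuousOn u (Icc a b)) (hv : ContinuousOn v (Icc a b)) (ha : u a < v a)
    (hstep : ∀ τ ∈ Icc a b, (∀ σ ∈ Icc a τ, u σ ≤ v σ) → u τ < v τ) :
    ∀ τ ∈ Icc a b, u τ < v τ := by
  by_contra! hbad
  obtain ⟨τ₁, hτ₁, hvu₁⟩ := hbad
  have hcont : ContinuousOn (v - u) (Icc a b) := hv.sub hu
  set K := Icc a b ∩ (v - u) ⁻¹' Iic 0
  have hK : IsCompact K := isCompact_Icc.of_isClosed_subset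
    (hcont.preimage_isClosed_of_isClosed isClosed_Icc isClosed_Iic) inter_subset_left
  obtain ⟨τ₀, ⟨hτ₀, hvu₀⟩, hmin⟩ := hK.exists_isLeast ⟨τ₁, hτ₁, sub_nonpos.2 hvu₁⟩
  have hbelow : ∀ σ ∈ Ico a τ₀, u σ < v σ := fun σ hσ => by
    by_contra! hσ'
    exact hσ.2.not_ge (hmin ⟨⟨hσ.1, hσ.2.le.trans hτ₀.2⟩, sub_nonpos.2 hσ'⟩)
  -- `v - u` vanishes somewhere on `[a, τ₀]`, and by minimality only at `τ₀`
  obtain ⟨σ, hσ, hσ0⟩ := intermediate_value_Icc' hτ₀.1 (hcont.mono (Icc_subset_Icc_right hτ₀.2))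
    ⟨hvu₀, (sub_pos.2 ha).le⟩
  have hστ₀ : σ = τ₀ := le_antisymm hσ.2
    (hmin ⟨⟨hσ.1, hσ.2.trans hτ₀.2⟩, (le_of_eq hσ0 : (v - u) σ ≤ 0)⟩)
  have hle : ∀ σ' ∈ Icc a τ₀, u σ' ≤ v σ' := fun σ' hσ' => by
    rcases hσ'.2.lt_or_eq with hlt | rfl
    · exact (hbelow σ' ⟨hσ'.1, hlt⟩).le
    · subst hστ₀
      exact (sub_eq_zero.1 hσ0).ge
  exact (sub_pos.2 (hstep τ₀ hτ₀ hle)).not_ge hvu₀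

theorem mul_sq_add_lt_of_four_mul_lt_one {A B ε : ℝ} (hA : 0 ≤ A) (hB : 0 ≤ B) (hε : 0 < ε)
    (hεA : A * ε < 1 - 4 * A * B) :
    A * (2 * B + ε) ^ 2 + B < 2 * B + ε := by
  nlinarith [mul_nonneg hB (by nlinarith : (0 : ℝ) ≤ 1 - 4 * A * B),
    mul_pos hε (by linarith : 0 < 1 - 4 * A * B - A * ε)]

theorem le_mul_of_integral_ineq {A B c τ : ℝ} {f g y : ℝ → ℝ} {h : ℝ → ℝ → ℝ} (hτ : 0 ≤ τ)
    (hf : ContinuousOn f (Icc 0 τ)) (hg : ContinuousOn g (Icc 0 τ))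
    (hy : ContinuousOn y (Icc 0 τ)) (hh : ContinuousOn (fun s => h s τ) (Icc 0 τ))
    (hf_nonneg : ∀ s ∈ Icc 0 τ, 0 ≤ f s) (hgτ : 0 < g τ) (hy_nonneg : ∀ s ∈ Icc 0 τ, 0 ≤ y s)
    (hy_ineq : y τ ≤ ∫ s in (0:ℝ)..τ, (f s * g τ * y s ^ 2 + h s τ))
    (hA : ∫ s in (0:ℝ)..τ, g s ^ 2 * f s ≤ A) (hB : 1 / g τ * ∫ s in (0:ℝ)..τ, h s τ ≤ B)
    (hle : ∀ s ∈ Icc 0 τ, y s ≤ c * g s) :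
    y τ ≤ (A * c ^ 2 + B) * g τ := by
  have hpoint : ∀ s ∈ Icc 0 τ, f s * g τ * y s ^ 2 ≤ g τ * c ^ 2 * (g s ^ 2 * f s) := by
    intro s hs
    have hsq : y s ^ 2 ≤ (c * g s) ^ 2 := pow_le_pow_left₀ (hy_nonneg s hs) (hle s hs) 2
    nlinarith [mul_le_mul_of_nonneg_left hsq (mul_nonneg (hf_nonneg s hs) hgτ.le)]
  have hquad_cont : ContinuousOn (fun s => f s * g τ * y s ^ 2) (Icc 0 τ) := by fun_prop
  have hgf_cont : ContinuousOn (fun s => g s ^ 2 * f s) (Icc 0 τ) := by fun_prop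
  calc y τ ≤ ∫ s in (0:ℝ)..τ, (f s * g τ * y s ^ 2 + h s τ) := hy_ineq
    _ = (∫ s in (0:ℝ)..τ, f s * g τ * y s ^ 2) + ∫ s in (0:ℝ)..τ, h s τ :=
      integral_add (hquad_cont.intervalIntegrable_of_Icc hτ) (hh.intervalIntegrable_of_Icc hτ)
    _ ≤ g τ * c ^ 2 * (∫ s in (0:ℝ)..τ, g s ^ 2 * f s) + B * g τ := by
      rw [← integral_const_mul]
      refine add_le_add (integral_mono_on hτ (hquad_cont.intervalIntegrable_of_Icc hτ)
        ((hgf_cont.intervalIntegrable_of_Icc hτ).const_mul _) hpoint) ?_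
      rwa [one_div_mul_eq_div, div_le_iff₀ hgτ] at hB
    _ ≤ g τ * c ^ 2 * A + B * g τ := by gcongr
    _ = (A * c ^ 2 + B) * g τ := by ring

theorem le_two_mul_of_integral_ineq {b t A B : ℝ} {f g y : ℝ → ℝ} {h : ℝ → ℝ → ℝ}
    (hf : ContinuousOn f (Icc 0 b)) (hg : ContinuousOn g (Icc 0 b))
    (hy : ContinuousOn y (Icc 0 b)) (hh : ∀ τ ∈ Icc 0 b, ContinuousOn (fun s => h s τ) (Icc 0 τ))
    (hf_nonneg : ∀ s ∈ Icc 0 b, 0 ≤ f s) (hg_pos : ∀ s ∈ Icc 0 b, 0 < g s)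
    (hy_nonneg : ∀ s ∈ Icc 0 b, 0 ≤ y s)
    (hy_ineq : ∀ τ ∈ Icc 0 b, y τ ≤ ∫ s in (0:ℝ)..τ, (f s * g τ * y s ^ 2 + h s τ))
    (ht : t ∈ Icc 0 b) (hA : ∀ τ ∈ Icc 0 t, ∫ s in (0:ℝ)..τ, g s ^ 2 * f s ≤ A)
    (hB : ∀ τ ∈ Icc 0 t, 1 / g τ * ∫ s in (0:ℝ)..τ, h s τ ≤ B) (hAB : 4 * A * B < 1) :
    y t ≤ 2 * B * g t := by
  have hsub : Icc 0 t ⊆ Icc 0 b := Icc_subset_Icc_right ht.2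
  have h0 : (0:ℝ) ∈ Icc 0 t := ⟨le_rfl, ht.1⟩
  have hA0 : 0 ≤ A := by simpa using hA 0 h0
  have hB0 : 0 ≤ B := by simpa using hB 0 h0
  have hy0 : y 0 ≤ 0 := by simpa using hy_ineq 0 (hsub h0)
  set ε₀ := (1 - 4 * A * B) / (A + 1)
  have hε₀ : 0 < ε₀ := div_pos (by linarith) (by linarith)
  have hlt : ∀ ε ∈ Ioo 0 ε₀, y t < (2 * B + ε) * g t := by
    rintro ε ⟨hε, hεε₀⟩
    have hεA : A * ε < 1 - 4 * A * B := by
      rw [lt_div_iff₀ (by linarith)] at hεε₀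
      nlinarith
    have hquad := mul_sq_add_lt_of_four_mul_lt_one hA0 hB0 hε hεA
    refine lt_of_forall_le_Icc_imp_lt (hy.mono hsub) ((continuousOn_const.mul hg).mono hsub)
      ?_ ?_ t ⟨ht.1, le_rfl⟩
    · exact hy0.trans_lt (mul_pos (by linarith) (hg_pos 0 (hsub h0)))
    · intro σ hσ hle
      have hsubσ : Icc 0 σ ⊆ Icc 0 b := (Icc_subset_Icc_right hσ.2).trans hsub
      have hgσ := hg_pos σ (hsub hσ)
      calc y σ ≤ (A * (2 * B + ε) ^ 2 + B) * g σ :=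
            le_mul_of_integral_ineq hσ.1 (hf.mono hsubσ) (hg.mono hsubσ) (hy.mono hsubσ)
              (hh σ (hsub hσ)) (fun s hs => hf_nonneg s (hsubσ hs)) hgσ
              (fun s hs => hy_nonneg s (hsubσ hs)) (hy_ineq σ (hsub hσ)) (hA σ hσ) (hB σ hσ) hle
        _ < (2 * B + ε) * g σ := mul_lt_mul_of_pos_right hquad hgσ
  have hlim : Tendsto (fun ε => (2 * B + ε) * g t) (𝓝[>] 0) (𝓝 (2 * B * g t)) := by
    apply tendsto_nhdsWithin_of_tendsto_nhds
    convert (by fun_prop : Continuous fun ε : ℝ => (2 * B + ε) * g t).tendsto 0 using 2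
    ring
  exact ge_of_tendsto hlim (by filter_upwards [Ioo_mem_nhdsGT hε₀] with ε hε using (hlt ε hε).le)

theorem bddAbove_range_mul_integral {b : ℝ} {φ : ℝ → ℝ} {F : ℝ → ℝ → ℝ}
    (hφ : ContinuousOn φ (Icc 0 b))
    (hF : ContinuousOn (fun p : ℝ × ℝ => F p.1 p.2) (Icc 0 b ×ˢ Icc 0 b)) :
    BddAbove (range fun τ : Icc (0:ℝ) b => φ τ * ∫ s in (0:ℝ)..(τ:ℝ), F s τ) := by
  obtain ⟨C, hC⟩ := isCompact_Icc.exists_bound_of_continuousOn hφ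
  obtain ⟨D, hD⟩ := (isCompact_Icc.prod isCompact_Icc).exists_bound_of_continuousOn hF
  refine ⟨C * (D * b), ?_⟩
  rintro _ ⟨⟨τ, hτ⟩, rfl⟩
  have hint_norm : ‖∫ s in (0:ℝ)..τ, F s τ‖ ≤ D * b := by
    refine (norm_integral_le_of_norm_le_const fun s hs => hD (s, τ) ⟨?_, hτ⟩).trans ?_
    · rw [uIoc_of_le hτ.1] at hs
      exact ⟨hs.1.le, hs.2.trans hτ.2⟩
    · rw [sub_zero, abs_of_nonneg hτ.1]
      exact mul_le_mul_of_nonneg_left hτ.2 ((norm_nonneg _).trans (hD (τ, τ) ⟨hτ, hτ⟩))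
  calc φ τ * ∫ s in (0:ℝ)..τ, F s τ ≤ ‖φ τ‖ * ‖∫ s in (0:ℝ)..τ, F s τ‖ :=
        (Real.le_norm_self _).trans (norm_mul _ _).le
    _ ≤ C * (D * b) :=
      mul_le_mul (hC τ hτ) hint_norm (norm_nonneg _) ((norm_nonneg _).trans (hC τ hτ))

theorem bddAbove_range_integral {b : ℝ} {F : ℝ → ℝ → ℝ}
    (hF : ContinuousOn (fun p : ℝ × ℝ => F p.1 p.2) (Icc 0 b ×ˢ Icc 0 b)) :
    BddAbove (range fun τ : Icc (0:ℝ) b => ∫ s in (0:ℝ)..(τ:ℝ), F s τ) := by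
  simpa using bddAbove_range_mul_integral (φ := fun _ => 1) continuousOn_const hF

theorem iSup_one_div_mul_mul_le_iSup {b : ℝ} {g I : ℝ → ℝ} (hb : 0 ≤ b)
    (hg_pos : ∀ τ ∈ Icc 0 b, 0 < g τ) (hg_anti : AntitoneOn g (Icc 0 b))
    (hbdd : BddAbove (range fun τ : Icc (0:ℝ) b => I τ)) (hI : ∀ τ ∈ Icc 0 b, 0 ≤ I τ) :
    (⨆ τ : Icc (0:ℝ) b, 1 / g τ * I τ) * g b ≤ ⨆ τ : Icc (0:ℝ) b, I τ := by
  rw [Real.iSup_mul_of_nonneg (hg_pos b ⟨hb, le_rfl⟩).le]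
  refine ciSup_mono hbdd fun ⟨τ, hτ⟩ => ?_
  calc 1 / g τ * I τ * g b = g b / g τ * I τ := by ring
    _ ≤ 1 * I τ := by
      gcongr
      · exact hI τ hτ
      · exact div_le_one_of_le₀ (hg_anti hτ ⟨hb, le_rfl⟩ hτ.2) (hg_pos τ hτ).le
    _ = I τ := one_mul _

theorem nonlinear_iteration_general
    (T : ℝ)
    (f g y : ℝ → ℝ) (h : ℝ → ℝ → ℝ)
    (hf : ContinuousOn f (Icc 0 T)) (hg : ContinuousOn g (Icc 0 T))
    (hh : ContinuousOn (fun p : ℝ × ℝ => h p.1 p.2) (Icc 0 T ×ˢ Icc 0 T))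
    (hy : ContinuousOn y (Icc 0 T))
    (hf_nonneg : ∀ t ∈ Icc (0:ℝ) T, 0 ≤ f t)
    (hg_pos : ∀ t ∈ Icc (0:ℝ) T, 0 < g t)
    (hg_anti : AntitoneOn g (Icc 0 T))
    (hh_nonneg : ∀ s ∈ Icc (0:ℝ) T, ∀ t ∈ Icc (0:ℝ) T, 0 ≤ h s t)
    (hy_nonneg : ∀ t ∈ Icc (0:ℝ) T, 0 ≤ y t)
    (hy_ineq : ∀ t ∈ Icc (0:ℝ) T,
      y t ≤ ∫ s in (0:ℝ)..t, (f s * g t * (y s) ^ 2 + h s t))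
    (hAB : (⨆ t : Icc (0:ℝ) T, ∫ s in (0:ℝ)..(t:ℝ), (g s) ^ 2 * f s) *
           (⨆ t : Icc (0:ℝ) T, (1 / g t) * ∫ s in (0:ℝ)..(t:ℝ), h s t) < 1 / 4) :
    ∀ t ∈ Icc (0:ℝ) T,
      y t ≤ 2 * ⨆ τ : Icc (0:ℝ) t, ∫ s in (0:ℝ)..(τ:ℝ), h s (τ:ℝ) := by
  intro t ht
  have hsub : Icc 0 t ⊆ Icc 0 T := Icc_subset_Icc_right ht.2
  have : Nonempty (Icc (0:ℝ) t) := ⟨⟨0, le_rfl, ht.1⟩⟩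
  have bddA := bddAbove_range_integral (F := fun s _ => g s ^ 2 * f s)
    (((hg.pow 2).mul hf).comp continuousOn_fst fun p hp => hp.1)
  have bddB := bddAbove_range_mul_integral (φ := fun τ => 1 / g τ)
    (continuousOn_const.div hg fun τ hτ => (hg_pos τ hτ).ne') hh
  have bddBt : BddAbove (range fun τ : Icc (0:ℝ) t => 1 / g τ * ∫ s in (0:ℝ)..(τ:ℝ), h s τ) :=
    bddB.mono (by rintro _ ⟨τ, rfl⟩; exact ⟨⟨τ, hsub τ.2⟩, rfl⟩)
  have bddHt := bddAbove_range_integral (hh.mono (prod_mono hsub hsub))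
  set A := ⨆ τ : Icc (0:ℝ) T, ∫ s in (0:ℝ)..(τ:ℝ), g s ^ 2 * f s
  set B := ⨆ τ : Icc (0:ℝ) T, 1 / g τ * ∫ s in (0:ℝ)..(τ:ℝ), h s τ
  set Bt := ⨆ τ : Icc (0:ℝ) t, 1 / g τ * ∫ s in (0:ℝ)..(τ:ℝ), h s τ
  have hA0 : 0 ≤ A := by simpa using le_ciSup bddA ⟨0, hsub ⟨le_rfl, ht.1⟩⟩
  have hBt : Bt ≤ B := ciSup_mono_of_forall_exists bddB fun τ => ⟨⟨τ, hsub τ.2⟩, le_rfl⟩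
  have hy_t := le_two_mul_of_integral_ineq hf hg hy
    (fun τ hτ => hh.comp (continuousOn_id.prodMk continuousOn_const)
      fun s hs => ⟨Icc_subset_Icc_right hτ.2 hs, hτ⟩)
    hf_nonneg hg_pos hy_nonneg hy_ineq ht (fun τ hτ => le_ciSup bddA ⟨τ, hsub hτ⟩)
    (fun τ hτ => le_ciSup bddBt ⟨τ, hτ⟩) (by nlinarith [mul_le_mul_of_nonneg_left hBt hA0])
  have hBtHt := iSup_one_div_mul_mul_le_iSup (I := fun τ => ∫ s in (0:ℝ)..τ, h s τ) ht.1
    (fun τ hτ => hg_pos τ (hsub hτ)) (hg_anti.mono hsub) bddHt fun τ hτ =>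
      integral_nonneg hτ.1 fun s hs => hh_nonneg s (hsub (Icc_subset_Icc_right hτ.2 hs)) τ (hsub hτ)
  linarith

/-- Nonlinear iteration lemma (Lemma 2.2): if a nonnegative continuous `y` satisfies
`y t ≤ ∫₀ᵗ (f s * g t * y s ^ 2 + h s t) ds` with `f ≥ 0`, `g > 0` decreasing, `h ≥ 0`,
and the product of the two suprema is `< 1/4`, then
`y t ≤ 2 * sup_{τ ∈ [0,t]} ∫₀^τ h s τ ds`. -/
theorem nonlinear_iteration
    (T : ℝ) (hT : 0 < T)
    (f g y : ℝ → ℝ) (h : ℝ → ℝ → ℝ)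
    (hf : ContinuousOn f (Icc 0 T)) (hg : ContinuousOn g (Icc 0 T))
    (hh : ContinuousOn (fun p : ℝ × ℝ => h p.1 p.2) (Icc 0 T ×ˢ Icc 0 T))
    (hy : ContinuousOn y (Icc 0 T))
    (hf_nonneg : ∀ t ∈ Icc (0:ℝ) T, 0 ≤ f t)
    (hg_pos : ∀ t ∈ Icc (0:ℝ) T, 0 < g t)
    (hg_anti : AntitoneOn g (Icc 0 T))
    (hh_nonneg : ∀ s ∈ Icc (0:ℝ) T, ∀ t ∈ Icc (0:ℝ) T, 0 ≤ h s t)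
    (hy_nonneg : ∀ t ∈ Icc (0:ℝ) T, 0 ≤ y t)
    (hy_ineq : ∀ t ∈ Icc (0:ℝ) T,
      y t ≤ ∫ s in (0:ℝ)..t, (f s * g t * (y s) ^ 2 + h s t))
    (hAB : (⨆ t : Icc (0:ℝ) T, ∫ s in (0:ℝ)..(t:ℝ), (g s) ^ 2 * f s) *
           (⨆ t : Icc (0:ℝ) T, (1 / g t) * ∫ s in (0:ℝ)..(t:ℝ), h s t) < 1 / 4) :
    ∀ t ∈ Icc (0:ℝ) T,
      y t ≤ 2 * ⨆ τ : Icc (0:ℝ) t, ∫ s in (0:ℝ)..(τ:ℝ), h s (τ:ℝ) :=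
  nonlinear_iteration_general T f g y h hf hg hh hy hf_nonneg hg_pos hg_anti hh_nonneg hy_nonneg
    hy_ineq hAB
end

section
/- Let u ∈ C²([−ℓ,ℓ]) be an eigenfunction of L u = ε u'' − (a u)' with Dirichlet boundary conditions u(±ℓ) = 0, relative to eigenvalue λ, and assume u > 0 on (−ℓ,ℓ) with ∫_{−ℓ}^{ℓ} u dx = 1. Then λ = ε(u'(ℓ) − u'(−ℓ)), and consequently λ < 0 (since u'(ℓ) ≤ 0 ≤ u'(−ℓ) and u'(ℓ) < u'(−ℓ) because u is positive in the interior and vanishes at both endpoints). -/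
/-!
Since `ε u'' - (a u)'` is the derivative of the flux `ε u' - a u`, integrating the equation
and using `∫ u = 1` gives `λ = flux(ℓ) - flux(-ℓ) = ε (u'(ℓ) - u'(-ℓ))`, the zeroth-order
terms dropping out by the boundary conditions. As `u` is positive inside and vanishes at the
ends, `u'(ℓ) ≤ 0 ≤ u'(-ℓ)`, so `λ ≤ 0`. If `λ = 0`, both endpoint derivatives vanish, so the
flux is constant and zero: `u` solves the linear equation `ε u' = a u` with `u(-ℓ) = 0`, and
Grönwall's uniqueness forces `u ≡ 0`, contradicting positivity.
-/

open Set intervalIntegral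

theorem IsMinOn.deriv_nonpos_of_Ioo {f : ℝ → ℝ} {a b : ℝ} (hab : a < b)
    (hmin : IsMinOn f (Ioo a b) b) (hf : DifferentiableAt ℝ f b) : deriv f b ≤ 0 := by
  have hcone : a - b ∈ posTangentConeAt (Ioo a b) b :=
    sub_mem_posTangentConeAt_of_openSegment_subset
      (openSegment_symm ℝ b a ▸ openSegment_eq_Ioo hab).subset
  have := hmin.localize.hasFDerivWithinAt_nonneg hf.hasFDerivAt.hasFDerivWithinAt hcone
  simp only [fderiv_eq_smul_deriv, smul_eq_mul] at this
  exact nonpos_of_mul_nonneg_right this (sub_neg.2 hab)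

theorem IsMinOn.deriv_nonneg_of_Ioo {f : ℝ → ℝ} {a b : ℝ} (hab : a < b)
    (hmin : IsMinOn f (Ioo a b) a) (hf : DifferentiableAt ℝ f a) : 0 ≤ deriv f a := by
  have hcone : b - a ∈ posTangentConeAt (Ioo a b) a :=
    sub_mem_posTangentConeAt_of_openSegment_subset (openSegment_eq_Ioo hab).subset
  have := hmin.localize.hasFDerivWithinAt_nonneg hf.hasFDerivAt.hasFDerivWithinAt hcone
  simp only [fderiv_eq_smul_deriv, smul_eq_mul] at this
  exact nonneg_of_mul_nonneg_right this (sub_pos.2 hab)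

theorem eqOn_zero_of_hasDerivAt_mul_self {f c : ℝ → ℝ} {a b : ℝ}
    (hc : ContinuousOn c (Icc a b)) (hf : ∀ x ∈ Icc a b, HasDerivAt f (c x * f x) x)
    (ha : f a = 0) : EqOn f 0 (Icc a b) := by
  obtain ⟨K, hK⟩ := isCompact_Icc.exists_bound_of_continuousOn hc
  refine eq_zero_of_abs_deriv_le_mul_abs_self_of_eq_zero_right (K := K)
    (HasDerivAt.continuousOn hf) (fun x hx => (hf x (Ico_subset_Icc_self hx)).hasDerivWithinAt) ha
    fun x hx => ?_
  rw [norm_mul]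
  exact mul_le_mul_of_nonneg_right (hK x (Ico_subset_Icc_self hx)) (norm_nonneg _)

namespace FokkerPlanck

noncomputable def op (ε : ℝ) (a u : ℝ → ℝ) (x : ℝ) : ℝ :=
  ε * deriv (deriv u) x - deriv (fun y => a y * u y) x

noncomputable def flux (ε : ℝ) (a u : ℝ → ℝ) (x : ℝ) : ℝ := ε * deriv u x - a x * u x

variable {ε l r : ℝ} {a u : ℝ → ℝ}

theorem hasDerivAt_flux (ha : ContDiff ℝ 1 a) (hu : ContDiff ℝ 2 u) (x : ℝ) :
    HasDerivAt (flux ε a u) (op ε a u x) x :=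
  (((hu.deriv' (n := 1)).differentiable one_ne_zero x).hasDerivAt.const_mul ε).sub
    ((ha.differentiable one_ne_zero x).mul (hu.differentiable two_ne_zero x)).hasDerivAt

theorem continuous_op (ha : ContDiff ℝ 1 a) (hu : ContDiff ℝ 2 u) : Continuous (op ε a u) :=
  (continuous_const.mul (hu.deriv' (n := 1)).continuous_deriv_one).sub
    (ha.mul (hu.of_le one_le_two)).continuous_deriv_one

theorem integral_op (ha : ContDiff ℝ 1 a) (hu : ContDiff ℝ 2 u) :
    ∫ x in l..r, op ε a u x = flux ε a u r - flux ε a u l :=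
  integral_eq_sub_of_hasDerivAt (fun x _ => hasDerivAt_flux ha hu x)
    ((continuous_op ha hu).intervalIntegrable l r)

theorem eqOn_zero_of_flux_eqOn_zero (hε : ε ≠ 0) (ha : ContinuousOn a (Icc l r))
    (hu : ∀ x ∈ Icc l r, DifferentiableAt ℝ u x) (hflux : EqOn (flux ε a u) 0 (Icc l r))
    (hl : u l = 0) : EqOn u 0 (Icc l r) := by
  refine eqOn_zero_of_hasDerivAt_mul_self (ha.div_const ε) (fun x hx => ?_) hl
  have hux : deriv u x = a x / ε * u x := by
    rw [div_mul_eq_mul_div, eq_div_iff hε, mul_comm, ← sub_eq_zero]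
    exact hflux hx
  exact hux ▸ (hu x hx).hasDerivAt

theorem eqOn_zero_of_op_eqOn_zero (hε : ε ≠ 0) (ha : ContDiff ℝ 1 a) (hu : ContDiff ℝ 2 u)
    (hop : EqOn (op ε a u) 0 (Icc l r)) (hl : u l = 0) (hl' : deriv u l = 0) :
    EqOn u 0 (Icc l r) := by
  have hflux : EqOn (flux ε a u) 0 (Icc l r) := fun x hx => by
    have hconst := constant_of_has_deriv_right_zero
      (HasDerivAt.continuousOn fun x _ => hasDerivAt_flux ha hu x)
      (fun y hy => by simpa only [hop (Ico_subset_Icc_self hy), Pi.zero_apply] using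
        (hasDerivAt_flux (ε := ε) ha hu y).hasDerivWithinAt) x hx
    rw [Pi.zero_apply, hconst]
    simp [flux, hl, hl']
  exact eqOn_zero_of_flux_eqOn_zero hε ha.continuous.continuousOn
    (fun x _ => hu.differentiable two_ne_zero x) hflux hl

end FokkerPlanck

open FokkerPlanck in
/-- For a positive normalized Dirichlet eigenfunction of `L u = ε u'' - (a u)'`,
the eigenvalue equals `ε (u'(ℓ) - u'(-ℓ))` and is negative. -/
theorem first_eigenvalue_negative
    (ℓ ε : ℝ) (hℓ : 0 < ℓ) (hε : 0 < ε)
    (a u : ℝ → ℝ) (lam : ℝ)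
    (ha : ContDiff ℝ 1 a) (hu : ContDiff ℝ 2 u)
    (heq : ∀ x ∈ Ioo (-ℓ) ℓ,
      ε * deriv (deriv u) x - deriv (fun y => a y * u y) x = lam * u x)
    (hbcL : u (-ℓ) = 0) (hbcR : u ℓ = 0)
    (hpos : ∀ x ∈ Ioo (-ℓ) ℓ, 0 < u x)
    (hnorm : (∫ x in (-ℓ)..ℓ, u x) = 1) :
    lam = ε * (deriv u ℓ - deriv u (-ℓ)) ∧ lam < 0 := by
  have hlt : -ℓ < ℓ := by linarith
  have hop : EqOn (op ε a u) (fun x => lam * u x) (Icc (-ℓ) ℓ) := closure_Ioo hlt.ne ▸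
    EqOn.closure heq (continuous_op ha hu) (continuous_const.mul hu.continuous)
  have hlam : lam = ε * (deriv u ℓ - deriv u (-ℓ)) :=
    calc lam = ∫ x in (-ℓ)..ℓ, lam * u x := by rw [integral_const_mul, hnorm, mul_one]
      _ = ∫ x in (-ℓ)..ℓ, op ε a u x :=
        integral_congr fun x hx => (hop (uIcc_of_le hlt.le ▸ hx)).symm
      _ = flux ε a u ℓ - flux ε a u (-ℓ) := integral_op ha hu
      _ = ε * (deriv u ℓ - deriv u (-ℓ)) := by simp only [flux, hbcL, hbcR]; ring
  have hR : deriv u ℓ ≤ 0 := IsMinOn.deriv_nonpos_of_Ioo hlt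
    (isMinOn_iff.2 fun x hx => hbcR ▸ (hpos x hx).le) (hu.differentiable two_ne_zero ℓ)
  have hL : 0 ≤ deriv u (-ℓ) := IsMinOn.deriv_nonneg_of_Ioo hlt
    (isMinOn_iff.2 fun x hx => hbcL ▸ (hpos x hx).le) (hu.differentiable two_ne_zero (-ℓ))
  refine ⟨hlam, lt_of_le_of_ne (hlam ▸ mul_nonpos_of_nonneg_of_nonpos hε.le (by linarith))
    fun hlam0 => ?_⟩
  have hL0 : deriv u (-ℓ) = 0 := le_antisymm (by nlinarith) hL
  have hu0 : EqOn u 0 (Icc (-ℓ) ℓ) := eqOn_zero_of_op_eqOn_zero hε.ne' ha hu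
    (fun x hx => by simp [hop hx, hlam0]) hbcL hL0
  exact (hpos 0 ⟨by linarith, hℓ⟩).ne' (hu0 ⟨by linarith, hℓ.le⟩)
end

section
/- Let f : ℝ → ℝ satisfy f'' ≥ c₀ > 0, and let u₊ < u₋ with f(u₊) = f(u₋). Define Φ(κ) = ∫_{u₊}^{u₋} ds/(κ − f(s)) for κ > max_{s∈[u₊,u₋]} f(s) = f(u₊). Then Φ is strictly decreasing on (f(u₊), ∞), Φ(κ) → 0 as κ → +∞, and Φ(κ) → +∞ as κ → f(u₊)⁺. Consequently, for any L > 0 there is a unique κ with Φ(κ) = L. -/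
/-!
Convexity and `f(u₊) = f(u₋)` give `f ≤ f(u₊)` on `[u₊, u₋]`, so for `κ > f(u₊)` the integrand
is positive and strictly decreasing in `κ`. This gives strict monotonicity, continuity (by
dominated convergence) and the decay `Φ(κ) ≤ (u₋ - u₊) / (κ - f(u₊))`. The tangent line at `u₊`
bounds `κ - f(s)` above by `(κ - f(u₊)) + |f'(u₊)| (s - u₊)`, whose reciprocal integrates to
`|f'(u₊)|⁻¹ log (1 + |f'(u₊)| (u₋ - u₊) / (κ - f(u₊)))`, which blows up as `κ ↓ f(u₊)`.
The intermediate value theorem then solves `Φ(κ) = L`, uniquely by monotonicity.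
-/

open Set intervalIntegral Filter Topology

theorem ConvexOn.deriv_mul_sub_le {f : ℝ → ℝ} {x y : ℝ} (hf : ConvexOn ℝ univ f)
    (hfx : DifferentiableAt ℝ f x) (hxy : x ≤ y) : deriv f x * (y - x) ≤ f y - f x := by
  rcases hxy.eq_or_lt with rfl | hlt
  · simp
  · have hslope := hf.deriv_le_slope (mem_univ x) (mem_univ y) hlt hfx
    rwa [slope_def_field, le_div_iff₀ (sub_pos.2 hlt)] at hslope

theorem integral_one_div_add_mul_sub {a b ε C : ℝ} (hε : 0 < ε) (hC : 0 < C) (hab : a ≤ b) :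
    ∫ s in a..b, 1 / (ε + C * (s - a)) = C⁻¹ * Real.log ((ε + C * (b - a)) / ε) := by
  have hlin : ∀ s, ε + C * (s - a) = C * s + (ε - C * a) := fun s => by ring
  simp_rw [hlin]
  rw [integral_comp_mul_add (fun x => 1 / x) hC.ne', integral_one_div_of_pos, smul_eq_mul]
  · ring_nf
  · linarith
  · nlinarith

theorem tendsto_sub_nhdsGT_zero (a : ℝ) : Tendsto (fun κ : ℝ => κ - a) (𝓝[>] a) (𝓝[>] 0) := by
  refine tendsto_nhdsWithin_iff.2
    ⟨?_, eventually_nhdsWithin_of_forall fun x hx => mem_Ioi.2 (sub_pos.2 hx)⟩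
  exact tendsto_nhdsWithin_of_tendsto_nhds (by simpa using (continuous_sub_right a).tendsto a)

theorem StrictAntiOn.existsUnique_eq_of_tendsto {φ : ℝ → ℝ} {c l L : ℝ}
    (hφ : StrictAntiOn φ (Ioi c)) (hcont : ContinuousOn φ (Ioi c))
    (htop : Tendsto φ atTop (𝓝 l)) (hc : Tendsto φ (𝓝[>] c) atTop) (hL : l < L) :
    ∃! κ, κ ∈ Ioi c ∧ φ κ = L := by
  obtain ⟨κ₂, hκ₂L, hκ₂⟩ := ((htop.eventually (eventually_lt_nhds hL)).and
    (eventually_gt_atTop c)).exists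
  obtain ⟨κ₁, hκ₁L, hκ₁⟩ := ((hc.eventually (eventually_gt_atTop L)).and
    self_mem_nhdsWithin).exists
  have hκ₁₂ : κ₁ ≤ κ₂ := by
    by_contra! h
    linarith [hφ (mem_Ioi.2 hκ₂) hκ₁ h]
  obtain ⟨κ, hκ, hκL⟩ := intermediate_value_Icc' hκ₁₂
    (hcont.mono fun x hx => lt_of_lt_of_le hκ₁ hx.1) ⟨hκ₂L.le, hκ₁L.le⟩
  have hκc : κ ∈ Ioi c := lt_of_lt_of_le hκ₁ hκ.1
  exact ⟨κ, ⟨hκc, hκL⟩, fun y ⟨hy, hyL⟩ => hφ.injOn hy hκc (hyL.trans hκL.symm)⟩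

section ReciprocalGapIntegral

variable {g : ℝ → ℝ} {a b : ℝ}

theorem sub_pos_of_le_left (hmax : ∀ s ∈ Icc a b, g s ≤ g a) {κ s : ℝ} (hκ : g a < κ)
    (hs : s ∈ Icc a b) : 0 < κ - g s :=
  sub_pos.2 ((hmax s hs).trans_lt hκ)

theorem continuousOn_one_div_sub (hg : ContinuousOn g (Icc a b))
    (hmax : ∀ s ∈ Icc a b, g s ≤ g a) {κ : ℝ} (hκ : g a < κ) :
    ContinuousOn (fun s => 1 / (κ - g s)) (Icc a b) :=
  continuousOn_const.div (continuousOn_const.sub hg) fun _ hs =>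
    (sub_pos_of_le_left hmax hκ hs).ne'

theorem strictAntiOn_integral_one_div_sub (hg : ContinuousOn g (Icc a b))
    (hmax : ∀ s ∈ Icc a b, g s ≤ g a) (hab : a < b) :
    StrictAntiOn (fun κ => ∫ s in a..b, 1 / (κ - g s)) (Ioi (g a)) := by
  intro κ hκ κ' hκ' hκκ'
  refine integral_lt_integral_of_continuousOn_of_le_of_exists_lt hab
    (continuousOn_one_div_sub hg hmax hκ') (continuousOn_one_div_sub hg hmax hκ)
    (fun s hs => ?_) ⟨a, left_mem_Icc.2 hab.le, ?_⟩
  · have := sub_pos_of_le_left hmax hκ ⟨hs.1.le, hs.2⟩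
    gcongr
  · have := sub_pos.2 (mem_Ioi.1 hκ)
    gcongr

theorem tendsto_integral_one_div_sub_atTop (hg : ContinuousOn g (Icc a b))
    (hmax : ∀ s ∈ Icc a b, g s ≤ g a) (hab : a ≤ b) :
    Tendsto (fun κ => ∫ s in a..b, 1 / (κ - g s)) atTop (𝓝 0) := by
  have hbound : Tendsto (fun κ => (b - a) * (κ - g a)⁻¹) atTop (𝓝 0) := by
    simpa [sub_eq_add_neg] using (tendsto_inv_atTop_zero.comp
      (tendsto_atTop_add_const_right _ (-g a) tendsto_id)).const_mul (b - a)
  refine tendsto_of_tendsto_of_tendsto_of_le_of_le' tendsto_const_nhds hbound ?_ ?_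
  all_goals filter_upwards [eventually_gt_atTop (g a)] with κ hκ
  · exact integral_nonneg hab fun s hs => (one_div_pos.2 (sub_pos_of_le_left hmax hκ hs)).le
  · calc ∫ s in a..b, 1 / (κ - g s)
        ≤ ∫ _ in a..b, (κ - g a)⁻¹ := by
          refine integral_mono_on hab
            ((continuousOn_one_div_sub hg hmax hκ).intervalIntegrable_of_Icc hab)
            intervalIntegrable_const fun s hs => ?_
          have := sub_pos_of_le_left hmax hκ hs
          rw [one_div]
          gcongr
          exact hmax s hs
      _ = (b - a) * (κ - g a)⁻¹ := by simp

theorem continuousOn_integral_one_div_sub (hg : ContinuousOn g (Icc a b))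
    (hmax : ∀ s ∈ Icc a b, g s ≤ g a) (hab : a ≤ b) :
    ContinuousOn (fun κ => ∫ s in a..b, 1 / (κ - g s)) (Ioi (g a)) := by
  intro κ₀ hκ₀
  have hδ : 0 < κ₀ - g a := sub_pos.2 hκ₀
  have hnear : ∀ᶠ κ in 𝓝 κ₀, (κ₀ + g a) / 2 < κ := eventually_gt_nhds (by linarith)
  refine (continuousAt_of_dominated_interval (bound := fun _ => 2 / (κ₀ - g a)) ?_ ?_
    intervalIntegrable_const ?_).continuousWithinAt
  · filter_upwards [hnear] with κ hκ
    rw [uIoc_of_le hab]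
    exact ((continuousOn_one_div_sub hg hmax (by linarith)).mono Ioc_subset_Icc_self)
      |>.aestronglyMeasurable measurableSet_Ioc
  · filter_upwards [hnear] with κ hκ
    refine MeasureTheory.ae_of_all _ fun s hs => ?_
    rw [uIoc_of_le hab] at hs
    have hgap : (κ₀ - g a) / 2 < κ - g s := by linarith [hmax s (Ioc_subset_Icc_self hs)]
    rw [Real.norm_eq_abs, abs_of_pos (one_div_pos.2 (by linarith)),
      div_le_div_iff₀ (by linarith) hδ]
    linarith
  · refine MeasureTheory.ae_of_all _ fun s hs => ?_
    rw [uIoc_of_le hab] at hs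
    exact continuousAt_const.div (continuousAt_id.sub continuousAt_const)
      (sub_pos_of_le_left hmax hκ₀ (Ioc_subset_Icc_self hs)).ne'

theorem tendsto_integral_one_div_sub_nhdsGT (hg : ContinuousOn g (Icc a b))
    (hmax : ∀ s ∈ Icc a b, g s ≤ g a) (hab : a < b) {C : ℝ} (hC : 0 < C)
    (hlin : ∀ s ∈ Icc a b, g a - g s ≤ C * (s - a)) :
    Tendsto (fun κ => ∫ s in a..b, 1 / (κ - g s)) (𝓝[>] g a) atTop := by
  have hD : 0 < C * (b - a) := mul_pos hC (sub_pos.2 hab)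
  have hinv : Tendsto (fun κ => C * (b - a) * (κ - g a)⁻¹) (𝓝[>] g a) atTop :=
    (tendsto_sub_nhdsGT_zero (g a)).inv_tendsto_nhdsGT_zero.const_mul_atTop hD
  have hlog : Tendsto (fun κ => C⁻¹ * Real.log (1 + C * (b - a) * (κ - g a)⁻¹))
      (𝓝[>] g a) atTop :=
    (Real.tendsto_log_atTop.comp (tendsto_atTop_add_const_left _ 1 hinv)).const_mul_atTop
      (inv_pos.2 hC)
  refine tendsto_atTop_mono' _ ?_ hlog
  filter_upwards [self_mem_nhdsWithin] with κ hκ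
  have hε : 0 < κ - g a := sub_pos.2 hκ
  calc C⁻¹ * Real.log (1 + C * (b - a) * (κ - g a)⁻¹)
      = ∫ s in a..b, 1 / ((κ - g a) + C * (s - a)) := by
        rw [integral_one_div_add_mul_sub hε hC hab.le, add_div, div_self hε.ne', div_eq_mul_inv]
    _ ≤ ∫ s in a..b, 1 / (κ - g s) := by
        refine integral_mono_on hab.le ?_
          ((continuousOn_one_div_sub hg hmax hκ).intervalIntegrable_of_Icc hab.le) fun s hs => ?_
        · exact (continuousOn_const.div (by fun_prop) fun s hs =>
            (add_pos_of_pos_of_nonneg hε (mul_nonneg hC.le (sub_nonneg.2 hs.1))).ne')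
            |>.intervalIntegrable_of_Icc hab.le
        · have := sub_pos_of_le_left hmax hκ hs
          gcongr
          linarith [hlin s hs]

end ReciprocalGapIntegral

theorem Phi_properties_general
    (f : ℝ → ℝ) (c₀ : ℝ) (hc₀ : 0 < c₀)
    (hf : ContDiff ℝ 2 f)
    (hconv : ∀ s, c₀ ≤ deriv (deriv f) s)
    (up um : ℝ) (hlt : up < um) (hfeq : f up = f um)
    (hfp : deriv f up < 0) :
    StrictAntiOn (fun κ => ∫ s in up..um, 1 / (κ - f s)) (Ioi (f up)) ∧
    Tendsto (fun κ => ∫ s in up..um, 1 / (κ - f s)) atTop (nhds 0) ∧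
    Tendsto (fun κ => ∫ s in up..um, 1 / (κ - f s))
      (nhdsWithin (f up) (Ioi (f up))) atTop ∧
    ∀ L : ℝ, 0 < L → ∃! κ : ℝ, κ ∈ Ioi (f up) ∧
      (∫ s in up..um, 1 / (κ - f s)) = L := by
  have hdiff : Differentiable ℝ f := hf.differentiable two_ne_zero
  have hconvex : ConvexOn ℝ univ f := convexOn_univ_of_deriv2_nonneg hdiff
    hf.differentiable_deriv_two fun s => (hc₀.trans_le (hconv s)).le
  have hcont : ContinuousOn f (Icc up um) := hdiff.continuous.continuousOn
  have hmax : ∀ s ∈ Icc up um, f s ≤ f up := fun s hs => by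
    simpa [← hfeq] using hconvex.le_max_of_mem_Icc (mem_univ up) (mem_univ um) hs
  have hlin : ∀ s ∈ Icc up um, f up - f s ≤ -deriv f up * (s - up) := fun s hs => by
    linarith [hconvex.deriv_mul_sub_le (hdiff up) hs.1]
  have hanti := strictAntiOn_integral_one_div_sub hcont hmax hlt
  have htop := tendsto_integral_one_div_sub_atTop hcont hmax hlt.le
  have hblowup := tendsto_integral_one_div_sub_nhdsGT hcont hmax hlt (neg_pos.2 hfp) hlin
  exact ⟨hanti, htop, hblowup, fun L hL => hanti.existsUnique_eq_of_tendsto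
    (continuousOn_integral_one_div_sub hcont hmax hlt.le) htop hblowup hL⟩

/-- Properties of `Φ(κ) = ∫_{u₊}^{u₋} ds/(κ - f(s))`: it is strictly decreasing on
`(f(u₊), ∞)`, tends to `0` at `+∞` and to `+∞` as `κ → f(u₊)⁺`; hence for every
`L > 0` there is a unique `κ > f(u₊)` with `Φ(κ) = L`. -/
theorem Phi_properties
    (f : ℝ → ℝ) (c₀ : ℝ) (hc₀ : 0 < c₀)
    (hf : ContDiff ℝ 2 f)
    (hconv : ∀ s, c₀ ≤ deriv (deriv f) s)
    (up um : ℝ) (hlt : up < um) (hfeq : f up = f um)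
    (hfp : deriv f up < 0) (hfm : 0 < deriv f um) :
    StrictAntiOn (fun κ => ∫ s in up..um, 1 / (κ - f s)) (Ioi (f up)) ∧
    Tendsto (fun κ => ∫ s in up..um, 1 / (κ - f s)) atTop (nhds 0) ∧
    Tendsto (fun κ => ∫ s in up..um, 1 / (κ - f s))
      (nhdsWithin (f up) (Ioi (f up))) atTop ∧
    ∀ L : ℝ, 0 < L → ∃! κ : ℝ, κ ∈ Ioi (f up) ∧
      (∫ s in up..um, 1 / (κ - f s)) = L :=
  Phi_properties_general f c₀ hc₀ hf hconv up um hlt hfeq hfp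
end
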